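/- arXiv:2209.07243 — 7 statements merged into one kernel-verified Lean document; each statement's English description precedes it below -/
import Mathlib

section
/- For jointly distributed random variables ξ₁, ξ₂, ξ₃ with finite ranges, 2·H(ξ₁, ξ₂, ξ₃) ≤ H(ξ₁, ξ₂) + H(ξ₁, ξ₃) + H(ξ₂, ξ₃). -/
open scoped Classical BigOperators

/-- Probability that the random variable `ξ` takes the value `s`. -/
noncomputable def probOf {Ω S : Type*} [Fintype Ω] (p : Ω → ℝ) (ξ : Ω → S) (s : S) : ℝ :=
  ∑ ω ∈ Finset.univ.filter (fun ω => ξ ω = s), p ω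

/-- Shannon entropy of a random variable with finite range. -/
noncomputable def shannonEntropy {Ω S : Type*} [Fintype Ω] (p : Ω → ℝ) (ξ : Ω → S) : ℝ :=
  -∑ s ∈ Finset.univ.image ξ, probOf p ξ s * Real.log (probOf p ξ s)

/-!
Write `P` for the joint law of `(ξ₁, ξ₂, ξ₃)` and `P₁₂, P₁₃, P₂₃` for its pair marginals. Then
`H₁₂ + H₁₃ + H₂₃ - 2 H₁₂₃ = -2 ∑ P log (√(P₁₂ P₁₃ P₂₃) / P)`, and by `log x ≤ x - 1` this is at
least `2 (1 - ∑ √(P₁₂ P₁₃ P₂₃))`. The last sum is at most `1` by the discrete Loomis–Whitney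
inequality, which is two applications of Cauchy–Schwarz.
-/

open Finset Real

section Marginals

variable {Ω S U : Type*} [Fintype Ω] {p : Ω → ℝ}

lemma probOf_nonneg (hp : ∀ ω, 0 ≤ p ω) (ξ : Ω → S) (s : S) : 0 ≤ probOf p ξ s :=
  sum_nonneg fun ω _ => hp ω

lemma probOf_le_probOf_comp (hp : ∀ ω, 0 ≤ p ω) (ξ : Ω → S) (f : S → U) (s : S) :
    probOf p ξ s ≤ probOf p (fun ω => f (ξ ω)) (f s) := by
  refine sum_le_sum_of_subset_of_nonneg (fun ω hω => ?_) fun ω _ _ => hp ω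
  simp only [mem_filter, mem_univ, true_and] at hω ⊢
  rw [hω]

lemma sum_probOf_mul (p : Ω → ℝ) {ξ : Ω → S} {T : Finset S} (hT : ∀ ω, ξ ω ∈ T) (f : S → ℝ) :
    ∑ s ∈ T, probOf p ξ s * f s = ∑ ω, p ω * f (ξ ω) := by
  rw [← sum_fiberwise_of_maps_to (fun ω _ => hT ω)]
  refine sum_congr rfl fun s _ => ?_
  rw [probOf, sum_mul]
  refine sum_congr rfl fun ω hω => ?_
  rw [(mem_filter.mp hω).2]

lemma sum_probOf (hsum : ∑ ω, p ω = 1) {ξ : Ω → S} {T : Finset S} (hT : ∀ ω, ξ ω ∈ T) :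
    ∑ s ∈ T, probOf p ξ s = 1 := by
  simpa [hsum] using sum_probOf_mul p hT fun _ => 1

lemma shannonEntropy_eq_neg_sum (p : Ω → ℝ) (ξ : Ω → S) :
    shannonEntropy p ξ = -∑ ω, p ω * log (probOf p ξ (ξ ω)) := by
  rw [shannonEntropy, sum_probOf_mul p fun ω => mem_image_of_mem ξ (mem_univ ω)]

end Marginals

lemma mul_log_add_log_add_log_sub_le {q a b c : ℝ} (hq : 0 ≤ q) (ha : q ≤ a) (hb : q ≤ b)
    (hc : q ≤ c) : q * (log a + log b + log c - 2 * log q) ≤ 2 * (√(a * b * c) - q) := by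
  rcases hq.eq_or_lt with rfl | hq
  · simp
  have ha₀ := hq.trans_le ha
  have hb₀ := hq.trans_le hb
  have hc₀ := hq.trans_le hc
  have habc : 0 < a * b * c := by positivity
  have hlog : log a + log b + log c = 2 * log √(a * b * c) := by
    rw [log_sqrt habc.le, log_mul (by positivity) hc₀.ne', log_mul ha₀.ne' hb₀.ne']
    ring
  have hgibbs : log (√(a * b * c) / q) ≤ √(a * b * c) / q - 1 :=
    log_le_sub_one_of_pos (by positivity)
  rw [log_div (by positivity) hq.ne'] at hgibbs
  calc q * (log a + log b + log c - 2 * log q) = 2 * q * (log √(a * b * c) - log q) := by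
        rw [hlog]; ring
    _ ≤ 2 * q * (√(a * b * c) / q - 1) := by gcongr
    _ = 2 * (√(a * b * c) - q) := by field_simp

theorem sum_sqrt_mul_mul_le_sqrt {α β γ : Type*} (s : Finset α) (t : Finset β) (u : Finset γ)
    {f : α × β → ℝ} {g : α × γ → ℝ} {h : β × γ → ℝ}
    (hf : ∀ i, 0 ≤ f i) (hg : ∀ i, 0 ≤ g i) (hh : ∀ i, 0 ≤ h i) :
    ∑ i ∈ s ×ˢ t ×ˢ u, √(f (i.1, i.2.1) * g (i.1, i.2.2) * h i.2) ≤
      √((∑ i ∈ s ×ˢ t, f i) * (∑ i ∈ s ×ˢ u, g i) * ∑ i ∈ t ×ˢ u, h i) := by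
  set G : α → ℝ := fun x => ∑ z ∈ u, g (x, z)
  set H : β → ℝ := fun y => ∑ z ∈ u, h (y, z)
  have hG : ∀ x, 0 ≤ G x := fun x => sum_nonneg fun z _ => hg _
  have hH : ∀ y, 0 ≤ H y := fun y => sum_nonneg fun z _ => hh _
  calc ∑ i ∈ s ×ˢ t ×ˢ u, √(f (i.1, i.2.1) * g (i.1, i.2.2) * h i.2)
      = ∑ j ∈ s ×ˢ t, √(f j) * ∑ z ∈ u, √(g (j.1, z)) * √(h (j.2, z)) := by
        simp only [sum_product, mul_sum, sqrt_mul (hf _), sqrt_mul (hg _), mul_assoc]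
    _ ≤ ∑ j ∈ s ×ˢ t, √(f j) * (√(G j.1) * √(H j.2)) := by
        gcongr with j
        exact sum_sqrt_mul_sqrt_le u (fun z => hg _) (fun z => hh _)
    _ = ∑ j ∈ s ×ˢ t, √(f j) * √(G j.1 * H j.2) := by simp only [sqrt_mul (hG _)]
    _ ≤ √(∑ j ∈ s ×ˢ t, f j) * √(∑ j ∈ s ×ˢ t, G j.1 * H j.2) :=
        sum_sqrt_mul_sqrt_le _ hf fun j => mul_nonneg (hG _) (hH _)
    _ = √((∑ i ∈ s ×ˢ t, f i) * (∑ i ∈ s ×ˢ u, g i) * ∑ i ∈ t ×ˢ u, h i) := by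
        rw [mul_assoc, sqrt_mul (sum_nonneg fun j _ => hf j),
          sum_product' (f := fun x y => G x * H y), ← sum_mul_sum]
        simp only [G, H, sum_product]

lemma sum_sqrt_probOf_pairs_le_one {Ω S₁ S₂ S₃ : Type*} [Fintype Ω] {p : Ω → ℝ}
    (hp : ∀ ω, 0 ≤ p ω) (hsum : ∑ ω, p ω = 1) {ξ₁ : Ω → S₁} {ξ₂ : Ω → S₂} {ξ₃ : Ω → S₃}
    {T₁ : Finset S₁} {T₂ : Finset S₂} {T₃ : Finset S₃}
    (h₁ : ∀ ω, ξ₁ ω ∈ T₁) (h₂ : ∀ ω, ξ₂ ω ∈ T₂) (h₃ : ∀ ω, ξ₃ ω ∈ T₃) :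
    ∑ t ∈ T₁ ×ˢ T₂ ×ˢ T₃, √(probOf p (fun ω => (ξ₁ ω, ξ₂ ω)) (t.1, t.2.1) *
      probOf p (fun ω => (ξ₁ ω, ξ₃ ω)) (t.1, t.2.2) *
      probOf p (fun ω => (ξ₂ ω, ξ₃ ω)) t.2) ≤ 1 := by
  refine (sum_sqrt_mul_mul_le_sqrt T₁ T₂ T₃
    (probOf_nonneg hp _) (probOf_nonneg hp _) (probOf_nonneg hp _)).trans_eq ?_
  rw [sum_probOf hsum fun ω => mem_product.2 ⟨h₁ ω, h₂ ω⟩,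
    sum_probOf hsum fun ω => mem_product.2 ⟨h₁ ω, h₃ ω⟩,
    sum_probOf hsum fun ω => mem_product.2 ⟨h₂ ω, h₃ ω⟩, mul_one, mul_one, sqrt_one]

theorem entropy_shearer {Ω S₁ S₂ S₃ : Type*} [Fintype Ω] (p : Ω → ℝ)
    (hp : ∀ ω, 0 ≤ p ω) (hsum : ∑ ω, p ω = 1)
    (ξ₁ : Ω → S₁) (ξ₂ : Ω → S₂) (ξ₃ : Ω → S₃) :
    2 * shannonEntropy p (fun ω => (ξ₁ ω, ξ₂ ω, ξ₃ ω)) ≤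
      shannonEntropy p (fun ω => (ξ₁ ω, ξ₂ ω)) + shannonEntropy p (fun ω => (ξ₁ ω, ξ₃ ω)) +
      shannonEntropy p (fun ω => (ξ₂ ω, ξ₃ ω)) := by
  set P := probOf p fun ω => (ξ₁ ω, ξ₂ ω, ξ₃ ω)
  set P₁₂ := probOf p fun ω => (ξ₁ ω, ξ₂ ω)
  set P₁₃ := probOf p fun ω => (ξ₁ ω, ξ₃ ω)
  set P₂₃ := probOf p fun ω => (ξ₂ ω, ξ₃ ω)
  have hLW := sum_sqrt_probOf_pairs_le_one hp hsum (fun ω => mem_image_of_mem ξ₁ (mem_univ ω))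
    (fun ω => mem_image_of_mem ξ₂ (mem_univ ω)) (fun ω => mem_image_of_mem ξ₃ (mem_univ ω))
  set T := univ.image ξ₁ ×ˢ univ.image ξ₂ ×ˢ univ.image ξ₃
  have hT : ∀ ω, (ξ₁ ω, ξ₂ ω, ξ₃ ω) ∈ T := by simp [T]
  have key : ∑ ω, p ω * (log (P₁₂ (ξ₁ ω, ξ₂ ω)) + log (P₁₃ (ξ₁ ω, ξ₃ ω)) +
      log (P₂₃ (ξ₂ ω, ξ₃ ω)) - 2 * log (P (ξ₁ ω, ξ₂ ω, ξ₃ ω))) ≤ 0 := by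
    rw [← sum_probOf_mul p hT fun t =>
      log (P₁₂ (t.1, t.2.1)) + log (P₁₃ (t.1, t.2.2)) + log (P₂₃ t.2) - 2 * log (P t)]
    calc _ ≤ ∑ t ∈ T, 2 * (√(P₁₂ (t.1, t.2.1) * P₁₃ (t.1, t.2.2) * P₂₃ t.2) - P t) :=
          sum_le_sum fun t _ => mul_log_add_log_add_log_sub_le (probOf_nonneg hp _ _)
            (probOf_le_probOf_comp hp _ (fun t => (t.1, t.2.1)) t)
            (probOf_le_probOf_comp hp _ (fun t => (t.1, t.2.2)) t)
            (probOf_le_probOf_comp hp _ Prod.snd t)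
      _ ≤ 0 := by
          rw [← mul_sum, sum_sub_distrib, sum_probOf hsum hT]
          linarith
  simp only [mul_sub, mul_add, sum_sub_distrib, sum_add_distrib, mul_left_comm _ (2 : ℝ),
    ← mul_sum] at key
  simp only [shannonEntropy_eq_neg_sum p]
  linarith
end

section
/- For any finite set A ⊆ X₁ × X₂ × X₃ with projections A₁₂, A₁₃, A₂₃ onto the pairs of coordinates, |A|² ≤ |A₁₂| · |A₁₃| · |A₂₃|. -/
/-!
Split `A` into its fibres over `A₁₂`. The fibre over `(a, b)` injects both into the fibre of
`A₁₃` over `a` and into the fibre of `A₂₃` over `b`, so its squared size is at most the product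
of these two. Cauchy–Schwarz over `A₁₂` then gives
`|A|² ≤ |A₁₂| · ∑_{(a,b) ∈ A₁₂} |A₁₃ over a| · |A₂₃ over b| ≤ |A₁₂| · |A₁₃| · |A₂₃|`.
-/

open scoped Classical

open Finset

theorem Finset.sum_mul_le_sum_mul_sum_of_subset_product {α β R : Type*} [CommSemiring R]
    [PartialOrder R] [CanonicallyOrderedAdd R] [IsOrderedRing R] {s : Finset (α × β)}
    {t : Finset α} {u : Finset β} (h : s ⊆ t ×ˢ u) (f : α → R) (g : β → R) :
    ∑ p ∈ s, f p.1 * g p.2 ≤ (∑ a ∈ t, f a) * ∑ b ∈ u, g b := by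
  rw [sum_mul_sum, ← sum_product']
  exact sum_le_sum_of_subset h

section LoomisWhitney

variable {X₁ X₂ X₃ : Type*}

theorem card_fiber₁₂_le_card_fiber₁₃ (A : Finset (X₁ × X₂ × X₃)) (p : X₁ × X₂) :
    #{x ∈ A | (x.1, x.2.1) = p} ≤ #{q ∈ A.image fun x => (x.1, x.2.2) | q.1 = p.1} :=
  card_le_card_of_injOn (fun x => (x.1, x.2.2)) (fun x hx => by grind)
    fun x hx y hy hxy => by grind

theorem card_fiber₁₂_le_card_fiber₂₃ (A : Finset (X₁ × X₂ × X₃)) (p : X₁ × X₂) :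
    #{x ∈ A | (x.1, x.2.1) = p} ≤ #{q ∈ A.image fun x => (x.2.1, x.2.2) | q.1 = p.2} :=
  card_le_card_of_injOn (fun x => (x.2.1, x.2.2)) (fun x hx => by grind)
    fun x hx y hy hxy => by grind

theorem sum_card_fiber₁₃_mul_card_fiber₂₃_le (A : Finset (X₁ × X₂ × X₃)) :
    ∑ p ∈ A.image (fun x => (x.1, x.2.1)),
      #{q ∈ A.image fun x => (x.1, x.2.2) | q.1 = p.1} *
        #{q ∈ A.image fun x => (x.2.1, x.2.2) | q.1 = p.2} ≤
      #(A.image fun x => (x.1, x.2.2)) * #(A.image fun x => (x.2.1, x.2.2)) := by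
  set A₁₃ := A.image fun x => (x.1, x.2.2)
  set A₂₃ := A.image fun x => (x.2.1, x.2.2)
  have hsub : A.image (fun x => (x.1, x.2.1)) ⊆ A₁₃.image Prod.fst ×ˢ A₂₃.image Prod.fst := by
    intro p
    simp only [mem_image, mem_product, A₁₃, A₂₃]
    grind
  rw [card_eq_sum_card_image Prod.fst A₁₃, card_eq_sum_card_image Prod.fst A₂₃]
  exact sum_mul_le_sum_mul_sum_of_subset_product hsub (fun a => #{q ∈ A₁₃ | q.1 = a})
    fun b => #{q ∈ A₂₃ | q.1 = b}

end LoomisWhitney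

/-- Discrete Loomis–Whitney inequality in dimension 3. -/
theorem loomis_whitney_discrete {X₁ X₂ X₃ : Type*} (A : Finset (X₁ × X₂ × X₃)) :
    A.card ^ 2 ≤ (A.image fun x => (x.1, x.2.1)).card *
      (A.image fun x => (x.1, x.2.2)).card * (A.image fun x => (x.2.1, x.2.2)).card := by
  set A₁₂ := A.image fun x => (x.1, x.2.1)
  have hfiber (p : X₁ × X₂) : #{x ∈ A | (x.1, x.2.1) = p} ^ 2 ≤
      #{q ∈ A.image fun x => (x.1, x.2.2) | q.1 = p.1} *
        #{q ∈ A.image fun x => (x.2.1, x.2.2) | q.1 = p.2} := by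
    rw [sq]
    exact Nat.mul_le_mul (card_fiber₁₂_le_card_fiber₁₃ A p) (card_fiber₁₂_le_card_fiber₂₃ A p)
  calc #A ^ 2 = (∑ p ∈ A₁₂, #{x ∈ A | (x.1, x.2.1) = p}) ^ 2 := by
        rw [← card_eq_sum_card_image]
    _ ≤ #A₁₂ * ∑ p ∈ A₁₂, #{x ∈ A | (x.1, x.2.1) = p} ^ 2 := sq_sum_le_card_mul_sum_sq ..
    _ ≤ _ := by
        rw [mul_assoc]
        gcongr _ * ?_
        exact (sum_le_sum fun p _ => hfiber p).trans (sum_card_fiber₁₃_mul_card_fiber₂₃_le A)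
end

section
/- Let A ⊆ X₁ × X₂ × X₃ be a finite set, A₁₂ and A₁₃ its projections onto coordinates (1,2) and (1,3), and let a, b ≥ 0 be reals with log|A₁₂| + log|A₁₃| ≤ a + b. Then A can be split as A = A' ∪ A'' such that log|A'₁| ≤ a and log|A''| ≤ b, where A'₁ is the projection of A' onto the first coordinate. -/
/-!
Split `A` according to whether the fibre of `A₁₃` over the first coordinate is heavy, i.e. has
at least `t = |A₁₃| / 2^a` points. At most `|A₁₃| / t = 2^a` first coordinates can be heavy. Over a
light first coordinate `x`, the fibre of `A` embeds into the product of the fibres of `A₁₂` and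
`A₁₃`, so it has at most `t` times as many points as the fibre of `A₁₂`; summing over `x`
gives `|A''| ≤ t |A₁₂| ≤ 2^(a+b) / 2^a = 2^b`.
-/

open Finset

namespace Real

variable {b x y c : ℝ}

lemma logb_natCast_le_of_le_rpow (hb : 1 < b) (hc : 0 ≤ c) {n : ℕ} (h : (n : ℝ) ≤ b ^ c) :
    logb b n ≤ c := by
  rcases n.eq_zero_or_pos with rfl | hn
  · simpa using hc
  · exact (logb_le_iff_le_rpow hb (by exact_mod_cast hn)).2 h

lemma mul_le_rpow_of_logb_add_logb_le (hb : 1 < b) (hx : 0 < x) (hy : 0 < y)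
    (h : logb b x + logb b y ≤ c) : x * y ≤ b ^ c := by
  rw [← logb_mul hx.ne' hy.ne'] at h
  exact (logb_le_iff_le_rpow hb (mul_pos hx hy)).1 h

end Real

namespace Finset

variable {α β γ δ : Type*} [DecidableEq α]

def fiberCard (s : Finset (α × δ)) (x : α) : ℕ := #{p ∈ s | p.1 = x}

lemma sum_fiberCard_le_card (s : Finset (α × δ)) (S : Finset α) :
    ∑ x ∈ S, fiberCard s x ≤ #s :=
  (sum_card_fiberwise_eq_card_filter s S Prod.fst).trans_le (card_filter_le _ _)

lemma card_mul_le_card_of_le_fiberCard {s : Finset (α × δ)} {S : Finset α} {t : ℝ}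
    (h : ∀ x ∈ S, t ≤ fiberCard s x) : #S * t ≤ #s := by
  calc (#S : ℝ) * t = ∑ _x ∈ S, t := by rw [sum_const, nsmul_eq_mul]
    _ ≤ ∑ x ∈ S, (fiberCard s x : ℝ) := sum_le_sum h
    _ ≤ #s := mod_cast sum_fiberCard_le_card s S

variable [DecidableEq β] [DecidableEq γ]

lemma fiberCard_le_mul (A : Finset (α × β × γ)) (x : α) :
    fiberCard A x ≤ fiberCard (A.image fun y => (y.1, y.2.1)) x *
      fiberCard (A.image fun y => (y.1, y.2.2)) x := by
  rw [fiberCard, fiberCard, fiberCard, ← card_product]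
  refine card_le_card_of_injOn (fun y => ((y.1, y.2.1), (y.1, y.2.2))) ?_ ?_
  · intro y hy
    obtain ⟨hyA, rfl⟩ := mem_filter.1 hy
    exact mem_product.2
      ⟨mem_filter.2 ⟨mem_image_of_mem _ hyA, rfl⟩, mem_filter.2 ⟨mem_image_of_mem _ hyA, rfl⟩⟩
  · rintro ⟨x₁, y₂, y₃⟩ - ⟨x₁', y₂', y₃'⟩ - h
    simp_all

lemma card_filter_fiberCard_lt_le (A : Finset (α × β × γ)) {t : ℝ} (ht : 0 ≤ t) :
    #{y ∈ A | (fiberCard (A.image fun y => (y.1, y.2.2)) y.1 : ℝ) < t} ≤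
      #(A.image fun y => (y.1, y.2.1)) * t := by
  set P := A.image fun y => (y.1, y.2.1)
  set Q := A.image fun y => (y.1, y.2.2)
  set A'' := A.filter fun y => (fiberCard Q y.1 : ℝ) < t
  have hfiber : ∀ x ∈ A''.image Prod.fst, (fiberCard A'' x : ℝ) ≤ fiberCard P x * t := by
    intro x hx
    obtain ⟨y, hy, rfl⟩ := mem_image.1 hx
    have hsub : fiberCard A'' y.1 ≤ fiberCard A y.1 :=
      card_le_card (filter_subset_filter _ (filter_subset _ _))
    calc (fiberCard A'' y.1 : ℝ) ≤ fiberCard P y.1 * fiberCard Q y.1 :=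
          mod_cast hsub.trans (fiberCard_le_mul A y.1)
      _ ≤ fiberCard P y.1 * t := by gcongr; exact (mem_filter.1 hy).2.le
  calc (#A'' : ℝ) = ∑ x ∈ A''.image Prod.fst, (fiberCard A'' x : ℝ) :=
        mod_cast card_eq_sum_card_image Prod.fst A''
    _ ≤ ∑ x ∈ A''.image Prod.fst, (fiberCard P x : ℝ) * t := sum_le_sum hfiber
    _ ≤ #P * t := by
      rw [← sum_mul]
      gcongr
      exact_mod_cast sum_fiberCard_le_card P _

end Finset

open scoped Classical

/-- Combinatorial splitting counterpart of `H(ξ₁)+H(ξ₁,ξ₂,ξ₃) ≤ H(ξ₁,ξ₂)+H(ξ₁,ξ₃)`. -/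
theorem splitting_combinatorial {X₁ X₂ X₃ : Type*} (A : Finset (X₁ × X₂ × X₃))
    (a b : ℝ) (ha : 0 ≤ a) (hb : 0 ≤ b)
    (h : Real.logb 2 (A.image fun x => (x.1, x.2.1)).card +
        Real.logb 2 (A.image fun x => (x.1, x.2.2)).card ≤ a + b) :
    ∃ A' A'' : Finset (X₁ × X₂ × X₃), A = A' ∪ A'' ∧
      Real.logb 2 (A'.image fun x => x.1).card ≤ a ∧ Real.logb 2 A''.card ≤ b := by
  rcases A.eq_empty_or_nonempty with rfl | hA
  · exact ⟨∅, ∅, by simp, by simpa using ha, by simpa using hb⟩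
  set P := A.image fun x => (x.1, x.2.1)
  set Q := A.image fun x => (x.1, x.2.2)
  have hP : (0 : ℝ) < #P := mod_cast (hA.image _).card_pos
  have hQ : (0 : ℝ) < #Q := mod_cast (hA.image _).card_pos
  have hPQ : (#P : ℝ) * #Q ≤ 2 ^ a * 2 ^ b := by
    rw [← Real.rpow_add two_pos]
    exact Real.mul_le_rpow_of_logb_add_logb_le one_lt_two hP hQ h
  have h2a : (0 : ℝ) < 2 ^ a := by positivity
  set t : ℝ := #Q / 2 ^ a
  refine ⟨{x ∈ A | t ≤ fiberCard Q x.1}, {x ∈ A | (fiberCard Q x.1 : ℝ) < t}, ?_, ?_, ?_⟩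
  · simp_rw [← not_le]
    exact (filter_union_filter_not_eq _ A).symm
  · refine Real.logb_natCast_le_of_le_rpow one_lt_two ha ?_
    have hheavy := card_mul_le_card_of_le_fiberCard (s := Q)
      (S := {x ∈ A | t ≤ fiberCard Q x.1}.image Prod.fst)
      (forall_mem_image.2 fun _ hy => (mem_filter.1 hy).2)
    rwa [← le_div_iff₀ (by positivity), div_div_cancel₀ hQ.ne'] at hheavy
  · refine Real.logb_natCast_le_of_le_rpow one_lt_two hb ?_
    calc (#{x ∈ A | (fiberCard Q x.1 : ℝ) < t} : ℝ) ≤ #P * t :=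
          card_filter_fiberCard_lt_le A (by positivity)
      _ = #P * #Q / 2 ^ a := mul_div_assoc _ _ _ |>.symm
      _ ≤ 2 ^ b := by rwa [div_le_iff₀ h2a, mul_comm _ (2 ^ a)]
end

section
/- For a finite group G with subgroups H₁, H₂, H₃ and uniform random g ∈ G with coset variables g_i = gH_i, the entropy inequality 2·H(g₁,g₂,g₃) ≤ H(g₁,g₂) + H(g₁,g₃) + H(g₂,g₃) is equivalent to the group-theoretic inequality |G|·|H₁∩H₂∩H₃|² ≥ |H₁∩H₂|·|H₁∩H₃|·|H₂∩H₃| ... i.e., prove: for any finite group G and subgroups H₁,H₂,H₃, [G : H₁∩H₂∩H₃]² ≤ [G : H₁∩H₂]·[G : H₁∩H₃]·[G : H₂∩H₃]. -/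
/-!
In entropy language, with `g` uniform on `G` and `gᵢ = gHᵢ`, one has `H(gᵢ, gⱼ, …) = log [G : Hᵢ ⊓ Hⱼ ⊓ …]`,
and Shearer's inequality follows from submodularity `H(g₁g₂g₃) + H(g₁) ≤ H(g₁g₂) + H(g₁g₃)` and
subadditivity `H(g₁g₂g₃) ≤ H(g₁) + H(g₂g₃)`. Both hold for indices directly: subadditivity is
`Subgroup.index_inf_le`, and submodularity comes from writing `[G : C ⊓ A ⊓ B] = [C ⊓ B : A ⊓ C ⊓ B] [G : C ⊓ B]`
and `[C ⊓ B : A ⊓ C ⊓ B] ≤ [C : A ⊓ C]`. An infinite index is `0`, and then so is the index of every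
smaller subgroup, which settles the degenerate cases.
-/

namespace Subgroup

variable {G : Type*} [Group G]

theorem index_inf_eq_relIndex_mul_index (H K : Subgroup G) :
    (H ⊓ K).index = H.relIndex K * K.index := by
  rw [← inf_relIndex_right, relIndex_mul_index inf_le_right]

theorem index_eq_zero_of_le {H K : Subgroup G} (h : H ≤ K) (hK : K.index = 0) : H.index = 0 :=
  Nat.eq_zero_of_zero_dvd (hK ▸ index_dvd_of_le h)

theorem index_inf_inf_mul_index_le (C A B : Subgroup G) :
    (C ⊓ A ⊓ B).index * C.index ≤ (C ⊓ A).index * (C ⊓ B).index := by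
  by_cases hA : A.relIndex C = 0
  · have hCA : (C ⊓ A).index = 0 := by
      rw [inf_comm, index_inf_eq_relIndex_mul_index, hA, zero_mul]
    simp [index_eq_zero_of_le inf_le_left hCA]
  · calc (C ⊓ A ⊓ B).index * C.index = A.relIndex (C ⊓ B) * C.index * (C ⊓ B).index := by
          rw [inf_comm C A, inf_assoc, index_inf_eq_relIndex_mul_index A]; ring
      _ ≤ A.relIndex C * C.index * (C ⊓ B).index := by
          gcongr; exact relIndex_le_of_le_right inf_le_left hA
      _ = (C ⊓ A).index * (C ⊓ B).index := by
          rw [inf_comm C A, index_inf_eq_relIndex_mul_index A C]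

end Subgroup

theorem index_shearer_general {G : Type*} [Group G] (H₁ H₂ H₃ : Subgroup G) :
    (H₁ ⊓ H₂ ⊓ H₃).index ^ 2 ≤ (H₁ ⊓ H₂).index * (H₁ ⊓ H₃).index * (H₂ ⊓ H₃).index := by
  rcases Nat.eq_zero_or_pos H₁.index with h₁ | h₁
  · simp [Subgroup.index_eq_zero_of_le (inf_le_left.trans inf_le_left) h₁]
  refine Nat.le_of_mul_le_mul_right ?_ h₁
  calc (H₁ ⊓ H₂ ⊓ H₃).index ^ 2 * H₁.index
      = (H₁ ⊓ H₂ ⊓ H₃).index * ((H₁ ⊓ H₂ ⊓ H₃).index * H₁.index) := by ring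
    _ ≤ (H₁ ⊓ (H₂ ⊓ H₃)).index * ((H₁ ⊓ H₂).index * (H₁ ⊓ H₃).index) := by
        rw [← inf_assoc]
        exact Nat.mul_le_mul_left _ (Subgroup.index_inf_inf_mul_index_le H₁ H₂ H₃)
    _ ≤ H₁.index * (H₂ ⊓ H₃).index * ((H₁ ⊓ H₂).index * (H₁ ⊓ H₃).index) :=
        Nat.mul_le_mul_right _ Subgroup.index_inf_le
    _ = (H₁ ⊓ H₂).index * (H₁ ⊓ H₃).index * (H₂ ⊓ H₃).index * H₁.index := by ring

/-- Group-theoretic form of the Shearer inequality for three variables: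
`[G : H₁∩H₂∩H₃]² ≤ [G : H₁∩H₂]·[G : H₁∩H₃]·[G : H₂∩H₃]` for a finite group `G`. -/
theorem index_shearer {G : Type*} [Group G] [Finite G] (H₁ H₂ H₃ : Subgroup G) :
    (H₁ ⊓ H₂ ⊓ H₃).index ^ 2 ≤ (H₁ ⊓ H₂).index * (H₁ ⊓ H₃).index * (H₂ ⊓ H₃).index :=
  index_shearer_general H₁ H₂ H₃
end

section
/- Let N ≥ 2 and X ⊆ {0, 1, …, N−1} be nonempty, and C_X ⊆ [0,1] the set of reals having an N-ary expansion with all digits in X. Then the packing dimension of C_X equals log(|X|)/log(N). -/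
open scoped ENNReal

/-- Extended-real logarithm of an `ℝ≥0∞` value. -/
noncomputable def elog (x : ℝ≥0∞) : EReal :=
  if x = ⊤ then (⊤ : EReal) else ((Real.log x.toReal : ℝ) : EReal)

/-- Minimal number of `ε`-balls needed to cover `s` (`⊤` if no finite cover exists). -/
noncomputable def coveringNumber {α : Type*} [PseudoMetricSpace α] (ε : ℝ) (s : Set α) : ℝ≥0∞ :=
  ⨅ (t : Finset α) (_ : s ⊆ ⋃ x ∈ t, Metric.ball x ε), (t.card : ℝ≥0∞)

/-- Upper box (Minkowski) dimension: `limsup log N(1/n, s) / log n`. -/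
noncomputable def upperBoxDim {α : Type*} [PseudoMetricSpace α] (s : Set α) : EReal :=
  Filter.limsup
    (fun n : ℕ => elog (coveringNumber (1 / n) s) * (((Real.log n)⁻¹ : ℝ) : EReal))
    Filter.atTop

/-- Packing dimension: infimum over countable covers of the supremum of the
upper box dimensions of the pieces. -/
noncomputable def packingDim {α : Type*} [PseudoMetricSpace α] (s : Set α) : EReal :=
  ⨅ (c : ℕ → Set α) (_ : s ⊆ ⋃ n, c n), ⨆ n, upperBoxDim (c n)

/-- The Cantor-type set of reals with an `N`-ary expansion whose digits all lie in `X`. -/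
def cantorDigitSet (N : ℕ) (X : Set ℕ) : Set ℝ :=
  {x | ∃ a : ℕ → ℕ, (∀ i, a i ∈ X) ∧ x = ∑' i, (a i : ℝ) / N ^ (i + 1)}

/-!
Upper bound: for `N⁻ᵏ < ε` the set `C_X` is covered by the `|X|ᵏ` balls of radius `ε` centred at
the points whose expansion is fixed after the first `k` digits, so its upper box dimension, and
hence its packing dimension, is at most `log |X| / log N`.

Lower bound: `C_X` is compact, so by Baire's theorem every countable cover of it has a piece whose
closure contains a cylinder of `C_X` (all expansions extending a fixed prefix of length `m`). Varying
the next `k` digits gives `|X|ᵏ` points of that cylinder at mutual distance `≥ N^-(m+k)`, so the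
piece has upper box dimension at least `log |X| / log N`.
-/

open Filter Topology Set

section CoveringNumber

variable {α : Type*} [PseudoMetricSpace α]

theorem coveringNumber_le_card {ε : ℝ} {s : Set α} {t : Finset α}
    (h : s ⊆ ⋃ x ∈ t, Metric.ball x ε) : coveringNumber ε s ≤ t.card :=
  iInf₂_le t h

theorem card_le_coveringNumber {ι : Type*} {ε δ : ℝ} {s : Set α} {T : Finset ι}
    {p : ι → α} (hp : ∀ i ∈ T, p i ∈ closure s)
    (hsep : ∀ i ∈ T, ∀ j ∈ T, i ≠ j → δ ≤ dist (p i) (p j)) (hε : 2 * ε < δ) :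
    (T.card : ℝ≥0∞) ≤ coveringNumber ε s := by
  refine le_iInf₂ fun t ht => ?_
  obtain rfl | ⟨i₀, -⟩ := T.eq_empty_or_nonempty
  · simp
  have : Nonempty α := ⟨p i₀⟩
  have hnear : ∀ i ∈ T, ∃ x ∈ t, dist (p i) x ≤ ε := by
    intro i hi
    have hcl : p i ∈ ⋃ x ∈ t, closure (Metric.ball x ε) := by
      rw [← t.closure_biUnion]
      exact closure_mono ht (hp i hi)
    obtain ⟨x, hx, hpx⟩ := mem_iUnion₂.1 hcl
    exact ⟨x, hx, Metric.closure_ball_subset_closedBall hpx⟩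
  choose! c hct hc using hnear
  by_contra! hlt
  obtain ⟨i, hi, j, hj, hij, hcij⟩ := Finset.exists_ne_map_eq_of_card_lt_of_maps_to
    (by exact_mod_cast hlt) fun i hi => hct i hi
  have hci := hc i hi
  rw [hcij] at hci
  linarith [dist_triangle_right (p i) (p j) (c j), hsep i hi j hj hij, hc j hj]

end CoveringNumber

theorem elog_le_log_natCast {x : ℝ≥0∞} {M : ℕ} (h : x ≤ M) :
    elog x ≤ (Real.log M : EReal) := by
  rw [elog, if_neg (ne_top_of_le_ne_top (ENNReal.natCast_ne_top M) h), EReal.coe_le_coe_iff]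
  rcases (ENNReal.toReal_nonneg (a := x)).eq_or_lt with hx | hx
  · rw [← hx, Real.log_zero]
    exact Real.log_natCast_nonneg M
  · exact Real.log_le_log hx
      (by simpa using ENNReal.toReal_mono (ENNReal.natCast_ne_top M) h)

theorem log_natCast_le_elog {x : ℝ≥0∞} {M : ℕ} (hM : 0 < M) (h : (M : ℝ≥0∞) ≤ x) :
    (Real.log M : EReal) ≤ elog x := by
  by_cases hx : x = ⊤
  · simp [elog, hx]
  rw [elog, if_neg hx, EReal.coe_le_coe_iff]
  exact Real.log_le_log (by exact_mod_cast hM) (by simpa using ENNReal.toReal_mono hx h)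

theorem tendsto_coe_add_div_log (L c : ℝ) :
    Tendsto (fun n : ℕ => ((L + c / Real.log n : ℝ) : EReal)) atTop (𝓝 L) := by
  have hlog : Tendsto (fun n : ℕ => c / Real.log n) atTop (𝓝 0) :=
    tendsto_const_nhds.div_atTop (Real.tendsto_log_atTop.comp tendsto_natCast_atTop_atTop)
  have hsum : Tendsto (fun n : ℕ => L + c / Real.log n) atTop (𝓝 L) := by
    simpa using hlog.const_add L
  exact (continuous_coe_real_ereal.tendsto L).comp hsum

section BoxDim

variable {α : Type*} [PseudoMetricSpace α] {s : Set α} {N M : ℕ}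

theorem upperBoxDim_le_of_coveringNumber_le (hN : 1 < N)
    (h : ∀ k ε, ((N : ℝ) ^ k)⁻¹ < ε → coveringNumber ε s ≤ ↑(M ^ k)) :
    upperBoxDim s ≤ ↑(Real.log M / Real.log N) := by
  have hlogN : 0 < Real.log N := Real.log_pos (by exact_mod_cast hN)
  refine (limsup_le_limsup (eventually_atTop.2 ⟨2, fun n hn => ?_⟩)).trans
    (tendsto_coe_add_div_log _ (Real.log M)).limsup_eq.le
  have hlogn : 0 < Real.log n := Real.log_pos (by exact_mod_cast hn)
  set k := Nat.log N n + 1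
  have hcov : coveringNumber (1 / n) s ≤ ↑(M ^ k) := by
    refine h k _ ?_
    rw [one_div]
    exact inv_strictAnti₀ (by positivity) (by exact_mod_cast Nat.lt_pow_succ_log_self hN n)
  have hk : (k : ℝ) ≤ Real.log n / Real.log N + 1 := by
    have hpow : ((N : ℝ) ^ Nat.log N n) ≤ n := by
      exact_mod_cast Nat.pow_log_le_self N (by omega)
    have := Real.log_le_log (by positivity) hpow
    rw [Real.log_pow, ← le_div_iff₀ hlogN] at this
    push_cast [k]
    linarith
  calc elog (coveringNumber (1 / n) s) * ↑(Real.log n)⁻¹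
      ≤ ↑(Real.log ↑(M ^ k)) * ↑(Real.log n)⁻¹ :=
        mul_le_mul_of_nonneg_right (elog_le_log_natCast hcov)
          (by exact_mod_cast (inv_pos.2 hlogn).le)
    _ = ↑(k * Real.log M / Real.log n) := by
        rw [← EReal.coe_mul, Nat.cast_pow, Real.log_pow, div_eq_mul_inv]
    _ ≤ ↑((Real.log n / Real.log N + 1) * Real.log M / Real.log n) := by
        rw [EReal.coe_le_coe_iff]
        gcongr
    _ = ↑(Real.log M / Real.log N + Real.log M / Real.log n) := by
        congr 1
        field_simp

theorem le_upperBoxDim_of_le_coveringNumber (m : ℕ) (hN : 1 < N) (hM : 0 < M)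
    (h : ∀ k ε, ε < ((N : ℝ) ^ (k + m))⁻¹ → ↑(M ^ k) ≤ coveringNumber ε s) :
    ↑(Real.log M / Real.log N) ≤ upperBoxDim s := by
  have hlogN : 0 < Real.log N := Real.log_pos (by exact_mod_cast hN)
  refine (tendsto_coe_add_div_log _ (-((m + 2) * Real.log M))).limsup_eq.ge.trans
    (limsup_le_limsup (eventually_atTop.2 ⟨N ^ (m + 1), fun n hn => ?_⟩))
  have hNn : N ≤ n := (Nat.le_self_pow (by omega) N).trans hn
  have hlogn : 0 < Real.log n := Real.log_pos (by exact_mod_cast hN.trans_le hNn)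
  set j := Nat.log N n
  have hmj : m + 1 ≤ j := Nat.le_log_of_pow_le hN hn
  set k := j - (m + 1)
  have hcov : ↑(M ^ k) ≤ coveringNumber (1 / n) s := by
    refine h k _ ?_
    rw [one_div]
    have hpow : N ^ (k + m) < n :=
      (Nat.pow_lt_pow_right hN (by omega)).trans_le (Nat.pow_log_le_self N (by omega))
    exact inv_strictAnti₀ (by positivity) (by exact_mod_cast hpow)
  have hk : Real.log n / Real.log N - (m + 2) ≤ k := by
    have hpow : (n : ℝ) < N ^ (j + 1) := by exact_mod_cast Nat.lt_pow_succ_log_self hN n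
    have := Real.log_lt_log (by positivity [hN.trans_le hNn]) hpow
    rw [Real.log_pow, ← div_lt_iff₀ hlogN] at this
    have hkj : (k : ℝ) = j - (m + 1) := by push_cast [k, Nat.cast_sub hmj]; ring
    push_cast at this
    linarith
  calc ((Real.log M / Real.log N + -((m + 2) * Real.log M) / Real.log n : ℝ) : EReal)
      = ↑((Real.log n / Real.log N - (m + 2)) * Real.log M / Real.log n) := by
        congr 1
        field_simp
        ring
    _ ≤ ↑(k * Real.log M / Real.log n) := by
        rw [EReal.coe_le_coe_iff]
        gcongr
    _ = ↑(Real.log ↑(M ^ k)) * ↑(Real.log n)⁻¹ := by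
        rw [← EReal.coe_mul, Nat.cast_pow, Real.log_pow, div_eq_mul_inv]
    _ ≤ elog (coveringNumber (1 / n) s) * ↑(Real.log n)⁻¹ :=
        mul_le_mul_of_nonneg_right (log_natCast_le_elog (pow_pos hM k) hcov)
          (by exact_mod_cast (inv_pos.2 hlogn).le)

end BoxDim

theorem exists_inter_ball_subset_closure_of_subset_iUnion {α : Type*} [PseudoMetricSpace α]
    {s : Set α} (hs : IsComplete s) (hne : s.Nonempty) {c : ℕ → Set α}
    (hc : s ⊆ ⋃ n, c n) :
    ∃ n, ∃ x ∈ s, ∃ r > 0, s ∩ Metric.ball x r ⊆ closure (c n) := by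
  have := hs.completeSpace_coe
  have := hne.to_subtype
  obtain ⟨n, y, hy⟩ := nonempty_interior_of_iUnion_of_closed
    (f := fun n => ((↑) : s → α) ⁻¹' closure (c n))
    (fun n => isClosed_closure.preimage continuous_subtype_val)
    (iUnion_eq_univ_iff.2 fun x => (mem_iUnion.1 (hc x.2)).imp fun _ hx => subset_closure hx)
  obtain ⟨r, hr, hball⟩ := Metric.isOpen_iff.1 isOpen_interior y hy
  exact ⟨n, y, y.2, r, hr, fun x ⟨hxs, hxr⟩ =>
    interior_subset (s := ((↑) : s → α) ⁻¹' closure (c n))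
      (hball (a := ⟨x, hxs⟩) hxr)⟩

namespace Real

variable {N : ℕ}

def replaceDigits (a : ℕ → Fin N) (m : ℕ) {k : ℕ} (b : Fin k → Fin N) : ℕ → Fin N :=
  fun i => if h : m ≤ i ∧ i < m + k then b ⟨i - m, by omega⟩ else a i

theorem replaceDigits_of_lt {a : ℕ → Fin N} {m k i : ℕ} {b : Fin k → Fin N} (h : i < m) :
    replaceDigits a m b i = a i :=
  dif_neg (by omega)

theorem replaceDigits_of_add_le {a : ℕ → Fin N} {m k i : ℕ} {b : Fin k → Fin N}
    (h : m + k ≤ i) : replaceDigits a m b i = a i :=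
  dif_neg (by omega)

theorem replaceDigits_add (a : ℕ → Fin N) (m : ℕ) {k : ℕ} (b : Fin k → Fin N)
    (j : Fin k) : replaceDigits a m b (m + j) = b j := by
  simp [replaceDigits]

theorem replaceDigits_mem_pi {Y : Set (Fin N)} {a : ℕ → Fin N} (ha : ∀ i, a i ∈ Y) (m : ℕ)
    {k : ℕ} {b : Fin k → Fin N} (hb : ∀ j, b j ∈ Y) :
    replaceDigits a m b ∈ univ.pi fun _ => Y := by
  intro i _
  unfold replaceDigits
  split_ifs
  exacts [hb _, ha i]

theorem pow_mul_sum_ofDigitsTerm (a : ℕ → Fin N) (K : ℕ) :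
    (N : ℝ) ^ K * ∑ i ∈ Finset.range K, ofDigitsTerm a i =
      Nat.ofDigits N ((List.range K).map fun i => (a i : ℕ)).reverse := by
  induction K with
  | zero => simp
  | succ K ih =>
    rcases N.eq_zero_or_pos with rfl | hN
    · exact (a 0).elim0
    rw [Finset.sum_range_succ, List.range_succ, List.map_append, List.reverse_append,
      List.map_singleton, List.reverse_singleton, List.singleton_append, Nat.ofDigits_cons,
      Nat.cast_add, Nat.cast_mul, ← ih, ofDigitsTerm]
    field_simp
    ring

theorem inv_pow_le_abs_ofDigits_sub (hN : 1 < N) {a b : ℕ → Fin N} {K : ℕ}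
    (htail : ∀ i, K ≤ i → a i = b i) (hne : ∃ i < K, a i ≠ b i) :
    ((N : ℝ) ^ K)⁻¹ ≤ |ofDigits a - ofDigits b| := by
  have htail' : (fun i => a (i + K)) = fun i => b (i + K) := funext fun i => htail _ (by omega)
  rw [ofDigits_eq_sum_add_ofDigits a K, ofDigits_eq_sum_add_ofDigits b K, htail',
    add_sub_add_right_eq_sub, inv_le_iff_one_le_mul₀' (by positivity), ← abs_of_pos
    (by positivity : (0 : ℝ) < N ^ K), ← abs_mul, mul_sub, pow_mul_sum_ofDigitsTerm,
    pow_mul_sum_ofDigitsTerm]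
  -- Scaled by `N ^ K`, the first `K` terms add up to the natural number with these base-`N`
  -- digits, so different prefixes land on different integers.
  have hdigits : ∀ c : ℕ → Fin N,
      ∀ l ∈ ((List.range K).map fun i => (c i : ℕ)).reverse, l < N := by
    simp
  have hne_nat : Nat.ofDigits N ((List.range K).map fun i => (a i : ℕ)).reverse ≠
      Nat.ofDigits N ((List.range K).map fun i => (b i : ℕ)).reverse := by
    intro h
    obtain ⟨i, hi, hab⟩ := hne
    have := List.reverse_injective (Nat.ofDigits_inj_of_len_eq hN (by simp) (hdigits a)
      (hdigits b) h)
    exact hab (Fin.ext (List.map_inj_left.1 this i (List.mem_range.2 hi)))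
  have := Int.one_le_abs (sub_ne_zero.2 (Int.natCast_inj.not.2 hne_nat))
  exact_mod_cast this

theorem isCompact_ofDigits_image_pi (Y : Set (Fin N)) :
    IsCompact (ofDigits '' univ.pi fun _ : ℕ => Y) :=
  (isClosed_set_pi fun _ _ => isClosed_discrete Y).isCompact.image continuous_ofDigits

theorem coveringNumber_ofDigits_image_pi_le (hN : 0 < N) (Y : Finset (Fin N)) {k : ℕ} {ε : ℝ}
    (hε : ((N : ℝ) ^ k)⁻¹ < ε) :
    coveringNumber ε (ofDigits '' univ.pi fun _ => (Y : Set (Fin N))) ≤ ↑(Y.card ^ k) := by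
  let a₀ : ℕ → Fin N := fun _ => ⟨0, hN⟩
  let centers := (Fintype.piFinset fun _ : Fin k => Y).image
    fun b => ofDigits (replaceDigits a₀ 0 b)
  calc coveringNumber ε _ ≤ centers.card := coveringNumber_le_card ?_
    _ ≤ ↑(Y.card ^ k) := by
      exact_mod_cast Finset.card_image_le.trans (Fintype.card_piFinset_const Y k).le
  rintro _ ⟨a, ha, rfl⟩
  refine mem_iUnion₂.2 ⟨_, Finset.mem_image_of_mem _
    (Fintype.mem_piFinset.2 fun j : Fin k => ha j trivial), ?_⟩
  rw [Metric.mem_ball, Real.dist_eq]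
  refine (abs_ofDigits_sub_ofDigits_le fun i hi => ?_).trans_lt hε
  simp [replaceDigits, hi]

theorem card_pow_le_coveringNumber_of_cylinder_subset (hN : 2 ≤ N) {Y : Finset (Fin N)}
    {D : Set ℝ} {a : ℕ → Fin N} (ha : ∀ i, a i ∈ Y) {m : ℕ}
    (hD : ∀ b ∈ univ.pi (fun _ => (Y : Set (Fin N))), (∀ i < m, b i = a i) →
      ofDigits b ∈ closure D)
    (k : ℕ) {ε : ℝ} (hε : ε < ((N : ℝ) ^ (k + (m + 1)))⁻¹) :
    ↑(Y.card ^ k) ≤ coveringNumber ε D := by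
  rw [← Fintype.card_piFinset_const Y k]
  refine card_le_coveringNumber (δ := ((N : ℝ) ^ (m + k))⁻¹)
    (p := fun b => ofDigits (replaceDigits a m b)) (fun b hb => ?_) (fun b _ b' _ hbb' => ?_) ?_
  · exact hD _ (replaceDigits_mem_pi ha m (Fintype.mem_piFinset.1 hb))
      fun _ => replaceDigits_of_lt
  · obtain ⟨j, hj⟩ := Function.ne_iff.1 hbb'
    rw [Real.dist_eq]
    refine inv_pow_le_abs_ofDigits_sub (by omega) (fun i hi => ?_) ⟨m + j, by omega, ?_⟩
    · rw [replaceDigits_of_add_le hi, replaceDigits_of_add_le hi]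
    · rwa [replaceDigits_add, replaceDigits_add]
  · have hN' : (2 : ℝ) ≤ N := by exact_mod_cast hN
    calc 2 * ε < 2 * ((N : ℝ) ^ (k + (m + 1)))⁻¹ := by gcongr
      _ ≤ N * ((N : ℝ) ^ (k + (m + 1)))⁻¹ := by gcongr
      _ = ((N : ℝ) ^ (m + k))⁻¹ := by
        rw [show k + (m + 1) = m + k + 1 by ring, pow_succ]
        field_simp

theorem packingDim_ofDigits_image_pi (hN : 2 ≤ N) {Y : Finset (Fin N)} (hY : Y.Nonempty) :
    packingDim (ofDigits '' univ.pi fun _ => (Y : Set (Fin N))) =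
      ↑(Real.log Y.card / Real.log N) := by
  set E := ofDigits '' univ.pi fun _ => (Y : Set (Fin N))
  have hN₁ : 1 < N := by omega
  apply le_antisymm
  · have hupper : upperBoxDim E ≤ ↑(Real.log Y.card / Real.log N) :=
      upperBoxDim_le_of_coveringNumber_le hN₁ fun k ε hε =>
        coveringNumber_ofDigits_image_pi_le (by omega) Y hε
    exact (iInf₂_le (fun _ => E) (subset_iUnion (fun _ => E) 0)).trans (iSup_le fun _ => hupper)
  refine le_iInf₂ fun c hc => ?_
  obtain ⟨d, hd⟩ := hY
  obtain ⟨n, _, ⟨a, ha, rfl⟩, r, hr, hball⟩ :=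
    exists_inter_ball_subset_closure_of_subset_iUnion (isCompact_ofDigits_image_pi _).isComplete
      ⟨_, mem_image_of_mem _ fun _ _ => hd⟩ hc
  obtain ⟨m, hm⟩ : ∃ m, ((N : ℝ) ^ m)⁻¹ < r := by
    simpa using exists_pow_lt_of_lt_one hr
      (inv_lt_one_of_one_lt₀ (by exact_mod_cast hN₁ : (1 : ℝ) < N))
  have hD : ∀ b ∈ univ.pi (fun _ => (Y : Set (Fin N))), (∀ i < m, b i = a i) →
      ofDigits b ∈ closure (c n) := fun b hb hba =>
    hball ⟨mem_image_of_mem _ hb, by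
      rw [Metric.mem_ball, Real.dist_eq]
      exact (abs_ofDigits_sub_ofDigits_le hba).trans_lt hm⟩
  have hcn : ↑(Real.log Y.card / Real.log N) ≤ upperBoxDim (c n) :=
    le_upperBoxDim_of_le_coveringNumber (m + 1) hN₁ (Finset.card_pos.2 ⟨d, hd⟩) fun k _ hε =>
      card_pow_le_coveringNumber_of_cylinder_subset hN (fun i => ha i trivial) hD k hε
  exact hcn.trans (le_iSup (fun n => upperBoxDim (c n)) n)

end Real

theorem cantorDigitSet_eq_image_ofDigits {N : ℕ} {X : Set ℕ} (hXN : ∀ d ∈ X, d < N) :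
    cantorDigitSet N X = Real.ofDigits '' univ.pi fun _ => (Fin.val ⁻¹' X : Set (Fin N)) := by
  ext x
  constructor
  · rintro ⟨a, ha, rfl⟩
    exact ⟨fun i => ⟨a i, hXN _ (ha i)⟩, fun i _ => ha i,
      by simp [Real.ofDigits, Real.ofDigitsTerm, div_eq_mul_inv]⟩
  · rintro ⟨a, ha, rfl⟩
    exact ⟨fun i => a i, fun i => ha i trivial,
      by simp [Real.ofDigits, Real.ofDigitsTerm, div_eq_mul_inv]⟩

/-- The packing dimension of `C_X` equals `log|X| / log N`. -/
theorem packingDim_cantorDigitSet (N : ℕ) (hN : 2 ≤ N) (X : Finset ℕ) (hX : X.Nonempty)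
    (hXN : ∀ d ∈ X, d < N) :
    packingDim (cantorDigitSet N ↑X) = ((Real.log X.card / Real.log N : ℝ) : EReal) := by
  have hY : (X.attachFin hXN).Nonempty := by
    rw [← Finset.card_pos, Finset.card_attachFin]
    exact hX.card_pos
  rw [cantorDigitSet_eq_image_ofDigits hXN, ← Finset.coe_attachFin hXN,
    Real.packingDim_ofDigits_image_pi hN hY, Finset.card_attachFin]
end

section
/- Let N ≥ 2, m ≥ 1, A ⊆ {0,…,N−1}^m, and let I ⊆ {1,…,m} be nonempty. Then the projection of the Cantor-type set C_A ⊆ [0,1]^m onto the coordinates in I equals C_{A_I}, where A_I ⊆ {0,…,N−1}^I is the projection of A onto the coordinates in I. -/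
/-- The multidimensional Cantor-type set built from the digit set `A`. -/
def cantorDigitSetPi (N : ℕ) {ι : Type*} (A : Set (ι → ℕ)) : Set (ι → ℝ) :=
  {x | ∃ a : ℕ → ι → ℕ, (∀ i, a i ∈ A) ∧ ∀ j, x j = ∑' i, (a i j : ℝ) / N ^ (i + 1)}

theorem image_comp_cantorDigitSetPi (N : ℕ) {ι κ : Type*} (A : Set (ι → ℕ)) (f : κ → ι) :
    (fun x : ι → ℝ => x ∘ f) '' cantorDigitSetPi N A =
      cantorDigitSetPi N ((fun v : ι → ℕ => v ∘ f) '' A) := by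
  ext y
  constructor
  · rintro ⟨x, ⟨a, ha, hx⟩, rfl⟩
    exact ⟨fun n => a n ∘ f, fun n => ⟨a n, ha n, rfl⟩, fun k => hx (f k)⟩
  · rintro ⟨a, ha, hy⟩
    choose b hbA hb using ha
    refine ⟨fun j => ∑' n, (b n j : ℝ) / N ^ (n + 1), ⟨b, hbA, fun j => rfl⟩, funext fun k => ?_⟩
    simp only [Function.comp_apply, hy k, ← hb]

theorem cantorDigitSetPi_proj_general (N : ℕ) {m : ℕ} (A : Set (Fin m → ℕ))
    (I : Set (Fin m)) :
    (fun x : Fin m → ℝ => fun i : I => x i.1) '' cantorDigitSetPi N A =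
      cantorDigitSetPi N ((fun v : Fin m → ℕ => fun i : I => v i.1) '' A) :=
  image_comp_cantorDigitSetPi N A Subtype.val

/-- The projection of `C_A` onto the coordinates in `I` is `C_{A_I}`. -/
theorem cantorDigitSetPi_proj (N : ℕ) (hN : 2 ≤ N) {m : ℕ} (A : Set (Fin m → ℕ))
    (hAN : ∀ v ∈ A, ∀ j, v j < N) (I : Set (Fin m)) (hI : I.Nonempty) :
    (fun x : Fin m → ℝ => fun i : I => x i.1) '' cantorDigitSetPi N A =
      cantorDigitSetPi N ((fun v : Fin m → ℕ => fun i : I => v i.1) '' A) :=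
  cantorDigitSetPi_proj_general N A I
end

section
/- Let N ≥ 2, A ⊆ {0,…,N−1}^m, and I ⊆ {1,…,m} nonempty, and suppose the projection π_I : A → A_I is uniform (every element of A_I has the same number r = |A|/|A_I| of preimages). Let d = log(|A|/|A_I|)/log N. Then for every subset X ⊆ C_A, dim_H(X) ≤ dim_H(X_I) + d, where X_I is the projection of X onto the coordinates in I. -/
open scoped Classical

/-!
Cover `X_I` by sets `U_k` with `∑ diam(U_k)^s` small, and let `N^{-n} ≤ diam U_k < N^{-n+1}`.
The points of `C_A` lying over `U_k` meet at most `C r^n` cylinders of depth `n`, where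
`C = (2N+3)^{|I|}` and `r = |A|/|A_I| = N^d`: the position of `U_k` pins down the `I`-digits of
such a cylinder up to `C` choices, and uniformity leaves `r` choices of the remaining digits at
each level. A depth-`n` cylinder has diameter `N^{-n}`, so these cylinders contribute
`C r^n N^{-n(s+d)} = C N^{-ns} ≤ C diam(U_k)^s` to the `(s+d)`-dimensional sum. Hence
`μH[s] X_I = 0` forces `μH[s+d] X = 0`, and `s > dim_H X_I` is arbitrary.
-/

open MeasureTheory Measure Metric Filter Finset
open scoped ENNReal NNReal Topology

universe u

theorem ENNReal.exists_le_rpow_le_add {a ρ : ℝ≥0∞} (ha : a ≤ ρ) (hρ : 0 < ρ) {t : ℝ}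
    (ht : 0 < t) {e : ℝ≥0} (he : 0 < e) :
    ∃ δ, 0 < δ ∧ a ≤ δ ∧ δ ≤ ρ ∧ δ ^ t ≤ a ^ t + e := by
  set η := min ρ ((e : ℝ≥0∞) ^ t⁻¹)
  have hη : η ^ t ≤ e := by
    calc η ^ t ≤ ((e : ℝ≥0∞) ^ t⁻¹) ^ t := ENNReal.rpow_le_rpow (min_le_right _ _) ht.le
      _ = e := ENNReal.rpow_inv_rpow ht.ne' _
  refine ⟨max a η, lt_max_of_lt_right (lt_min hρ ?_), le_max_left _ _,
    max_le ha (min_le_left _ _), ?_⟩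
  · exact ENNReal.rpow_pos (by exact_mod_cast he) ENNReal.coe_ne_top
  rcases le_total a η with h | h
  · rw [max_eq_right h]; exact hη.trans le_add_self
  · rw [max_eq_left h]; exact le_self_add

theorem tsum_ediam_rpow_le_card_mul {X κ : Type*} [PseudoEMetricSpace X] {c : κ → Set X}
    {S : Finset κ} (hS : ∀ i, (c i).Nonempty → i ∈ S) {ρ : ℝ≥0∞} (hc : ∀ i, ediam (c i) ≤ ρ)
    {u : ℝ} (hu : 0 < u) : ∑' i, ediam (c i) ^ u ≤ #S * ρ ^ u := by
  have hsupp : ∀ i ∉ S, ediam (c i) ^ u = 0 := fun i hi => by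
    rw [Set.not_nonempty_iff_eq_empty.1 (mt (hS i) hi), ediam_empty,
      ENNReal.zero_rpow_of_pos hu]
  rw [tsum_eq_sum hsupp, ← nsmul_eq_mul, ← sum_const]
  exact sum_le_sum fun i _ => ENNReal.rpow_le_rpow (hc i) hu.le

section Hausdorff

variable {X Y : Type*} [EMetricSpace X] [MeasurableSpace X] [BorelSpace X]
  [EMetricSpace Y] [MeasurableSpace Y] [BorelSpace Y]

theorem exists_cover_of_hausdorffMeasure_lt {s : Set X} {d : ℝ} (hd : 0 < d) {ε : ℝ≥0∞}
    (hs : μH[d] s < ε) {ρ : ℝ≥0∞} (hρ : 0 < ρ) :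
    ∃ T : ℕ → Set X, s ⊆ ⋃ k, T k ∧ (∀ k, ediam (T k) ≤ ρ) ∧ ∑' k, ediam (T k) ^ d < ε := by
  rw [hausdorffMeasure_apply] at hs
  obtain ⟨T, hT⟩ := iInf_lt_iff.1 ((le_iSup₂_of_le ρ hρ le_rfl).trans_lt hs)
  obtain ⟨hcover, hT⟩ := iInf_lt_iff.1 hT
  obtain ⟨hdiam, hsum⟩ := iInf_lt_iff.1 hT
  refine ⟨T, hcover, hdiam, (le_of_eq (tsum_congr fun k => ?_)).trans_lt hsum⟩
  rcases (T k).eq_empty_or_nonempty with h | h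
  · simp [h, ENNReal.zero_rpow_of_pos hd]
  · simp [h]

theorem hausdorffMeasure_le_of_forall_cover {s : Set X} {d : ℝ} {a : ℝ≥0∞}
    (h : ∀ ρ : ℝ≥0∞, 0 < ρ → ∃ (κ : Type u) (_ : Countable κ) (c : κ → Set X),
      s ⊆ ⋃ i, c i ∧ (∀ i, ediam (c i) ≤ ρ) ∧ ∑' i, ediam (c i) ^ d ≤ a) :
    μH[d] s ≤ a := by
  choose κ hκ c hcover hdiam hsum using fun n : ℕ => h (n : ℝ≥0∞)⁻¹ (by simp)
  calc μH[d] s ≤ liminf (fun n => ∑' i, ediam (c n i) ^ d) atTop :=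
        hausdorffMeasure_le_liminf_tsum d s _ ENNReal.tendsto_inv_nat_nhds_zero c
          (.of_forall hdiam) (.of_forall hcover)
    _ ≤ a := liminf_le_of_le (by isBoundedDefault) fun b hb =>
        hb.exists.choose_spec.trans (hsum _)

theorem hausdorffMeasure_eq_zero_of_image_eq_zero {f : X → Y} {s : Set X} {t u : ℝ}
    (ht : 0 < t) {C : ℝ≥0∞} (hC : C ≠ ∞) {ρ₀ : ℝ≥0∞} (hρ₀ : 0 < ρ₀)
    (hcover : ∀ δ : ℝ≥0∞, 0 < δ → δ ≤ ρ₀ → ∀ U : Set Y, ediam U ≤ δ →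
      ∃ (κ : Type u) (_ : Countable κ) (c : κ → Set X),
        s ∩ f ⁻¹' U ⊆ ⋃ i, c i ∧ (∀ i, ediam (c i) ≤ δ) ∧ ∑' i, ediam (c i) ^ u ≤ C * δ ^ t)
    (hfs : μH[t] (f '' s) = 0) : μH[u] s = 0 := by
  have key : ∀ ε : ℝ≥0∞, ε ≠ 0 → μH[u] s ≤ C * ε := by
    intro ε hε
    have hε2 : ε / 2 ≠ 0 := by simpa using hε
    refine hausdorffMeasure_le_of_forall_cover fun ρ hρ => ?_
    have hρ' : 0 < min ρ ρ₀ := lt_min hρ hρ₀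
    obtain ⟨T, hsT, hTdiam, hTsum⟩ := exists_cover_of_hausdorffMeasure_lt ht
      (hfs.trans_lt (pos_iff_ne_zero.2 hε2)) hρ'
    -- `hcover` needs `0 < δ`, so each `T k` (possibly a point) is given a slightly larger scale.
    obtain ⟨e, he, hesum⟩ := ENNReal.exists_pos_sum_of_countable hε2 ℕ
    choose δ hδ0 hTδ hδρ hδt using fun k =>
      ENNReal.exists_le_rpow_le_add (hTdiam k) hρ' ht (he k)
    choose κ hκ c hc hcdiam hcsum using fun k =>
      hcover (δ k) (hδ0 k) ((hδρ k).trans (min_le_right _ _)) (T k) (hTδ k)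
    refine ⟨Σ k, κ k, inferInstance, fun i => c i.1 i.2, fun x hx => ?_, fun i => ?_, ?_⟩
    · obtain ⟨k, hk⟩ := Set.mem_iUnion.1 (hsT ⟨x, hx, rfl⟩)
      obtain ⟨i, hi⟩ := Set.mem_iUnion.1 (hc k ⟨hx, hk⟩)
      exact Set.mem_iUnion.2 ⟨⟨k, i⟩, hi⟩
    · exact (hcdiam i.1 i.2).trans ((hδρ i.1).trans (min_le_left _ _))
    calc ∑' i : Σ k, κ k, ediam (c i.1 i.2) ^ u = ∑' k, ∑' i, ediam (c k i) ^ u :=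
          ENNReal.tsum_sigma' _
      _ ≤ ∑' k, C * (ediam (T k) ^ t + e k) := ENNReal.tsum_le_tsum fun k =>
          (hcsum k).trans (by gcongr; exact hδt k)
      _ = C * (∑' k, ediam (T k) ^ t + ∑' k, (e k : ℝ≥0∞)) := by
          rw [ENNReal.tsum_mul_left, ENNReal.tsum_add]
      _ ≤ C * (ε / 2 + ε / 2) := by gcongr
      _ = C * ε := by rw [ENNReal.add_halves]
  have hlim : Tendsto (fun n : ℕ => C * (n : ℝ≥0∞)⁻¹) atTop (𝓝 0) := by
    simpa using ENNReal.Tendsto.const_mul ENNReal.tendsto_inv_nat_nhds_zero (Or.inr hC)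
  exact le_antisymm (ge_of_tendsto' hlim fun n => key _ (by simp)) bot_le

theorem dimH_le_dimH_image_add {f : X → Y} {s : Set X} {d : ℝ} (hd : 0 ≤ d)
    (h : ∀ t : ℝ, 0 < t → μH[t] (f '' s) = 0 → μH[t + d] s = 0) :
    dimH s ≤ dimH (f '' s) + ENNReal.ofReal d := by
  refine ENNReal.le_of_forall_pos_le_add fun ε hε hlt => ?_
  have htop : dimH (f '' s) ≠ ∞ := (le_self_add.trans_lt hlt).ne
  set t : ℝ≥0 := (dimH (f '' s)).toNNReal + ε
  have hft : dimH (f '' s) < t := by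
    rw [ENNReal.coe_add, ENNReal.coe_toNNReal htop]
    exact ENNReal.lt_add_right htop (by exact_mod_cast hε.ne')
  have hst := h t (by positivity) (hausdorffMeasure_of_dimH_lt hft)
  calc dimH s ≤ (t + d.toNNReal : ℝ≥0) := by
        refine dimH_le_of_hausdorffMeasure_ne_top ?_
        rw [NNReal.coe_add, Real.coe_toNNReal d hd, hst]
        exact ENNReal.zero_ne_top
    _ = dimH (f '' s) + ENNReal.ofReal d + ε := by
        rw [ENNReal.coe_add, ENNReal.coe_add, ENNReal.coe_toNNReal htop, add_right_comm]
        rfl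

end Hausdorff

theorem exists_inv_pow_le_and_mul_pow_le {N δ : ℝ} (hN : 1 < N) (hδ : 0 < δ) (hδ1 : δ ≤ 1) :
    ∃ n : ℕ, (N ^ n)⁻¹ ≤ δ ∧ δ * N ^ n ≤ N := by
  obtain ⟨n, hle, hlt⟩ := exists_nat_pow_near (one_le_inv₀ hδ |>.2 hδ1) hN
  refine ⟨n + 1, (inv_le_comm₀ (by positivity) hδ).2 hlt.le, ?_⟩
  rw [pow_succ, ← mul_assoc]
  refine mul_le_of_le_one_left (by positivity) ?_
  exact (mul_le_mul_of_nonneg_left hle hδ.le).trans (mul_inv_cancel₀ hδ.ne').le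

theorem natCast_pow_mul_ofReal_rpow_add_le {N d t : ℝ} {r : ℕ} (hN : 0 < N)
    (hrd : (r : ℝ) ≤ N ^ d) (hd : 0 ≤ d) (ht : 0 ≤ t) (n : ℕ) :
    (r : ℝ≥0∞) ^ n * ENNReal.ofReal (N ^ n)⁻¹ ^ (t + d) ≤ ENNReal.ofReal (N ^ n)⁻¹ ^ t := by
  have hd' : ((N ^ n)⁻¹) ^ d = ((N ^ d) ^ n)⁻¹ := by
    rw [Real.inv_rpow (by positivity), ← Real.rpow_natCast_mul hN.le, mul_comm,
      Real.rpow_mul_natCast hN.le]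
  rw [← ENNReal.ofReal_natCast, ← ENNReal.ofReal_pow r.cast_nonneg,
    ENNReal.ofReal_rpow_of_nonneg (by positivity) (by positivity),
    ENNReal.ofReal_rpow_of_nonneg (by positivity) ht, ← ENNReal.ofReal_mul (by positivity)]
  refine ENNReal.ofReal_le_ofReal ?_
  rw [Real.rpow_add (by positivity), hd', mul_left_comm, ← div_eq_mul_inv]
  exact mul_le_of_le_one_right (by positivity)
    ((div_le_one (by positivity)).2 (pow_le_pow_left₀ r.cast_nonneg hrd n))

theorem Nat.cast_le_rpow_log_div_log {b : ℝ} (hb : 1 < b) (r : ℕ) :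
    (r : ℝ) ≤ b ^ (Real.log r / Real.log b) := by
  rcases r.eq_zero_or_pos with rfl | hr
  · rw [Nat.cast_zero]; positivity
  · exact (Real.rpow_logb (by positivity) hb.ne' (by exact_mod_cast hr)).ge

theorem card_piFinset_filter_eq_le_pow {κ α β : Type*} [Fintype κ] [DecidableEq κ]
    [DecidableEq β] (s : Finset α) (f : α → β) {r : ℕ} (hr : ∀ b, #{a ∈ s | f a = b} ≤ r)
    (w : κ → β) : #(Fintype.piFinset fun i => {a ∈ s | f a = w i}) ≤ r ^ Fintype.card κ := by
  rw [Fintype.card_piFinset]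
  exact (prod_le_prod' fun i _ => hr (w i)).trans (by simp)

theorem card_le_of_forall_le_add {κ : Type*} [Fintype κ] (S : Finset (κ → ℕ)) (c : ℕ)
    (hS : ∀ k ∈ S, ∀ k' ∈ S, ∀ j, k j ≤ k' j + c) : #S ≤ (2 * c + 1) ^ Fintype.card κ := by
  rcases S.eq_empty_or_nonempty with rfl | ⟨k₀, hk₀⟩
  · simp
  calc #S ≤ #(Fintype.piFinset fun j => Icc (k₀ j - c) (k₀ j + c)) :=
        card_le_card fun k hk => Fintype.mem_piFinset.2 fun j =>
          mem_Icc.2 ⟨by have := hS k₀ hk₀ k hk j; omega, hS k hk k₀ hk₀ j⟩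
    _ = ∏ j, (k₀ j + c + 1 - (k₀ j - c)) := by simp [Fintype.card_piFinset]
    _ ≤ ∏ _j : κ, (2 * c + 1) := prod_le_prod' fun j _ => by omega
    _ = (2 * c + 1) ^ Fintype.card κ := by simp

section Uniform

variable {α β : Type*} [DecidableEq β] {s : Finset α} {f : α → β}

theorem card_image_dvd_of_uniform
    (h : ∀ y ∈ s.image f, #{x ∈ s | f x = y} * #(s.image f) = #s) : #(s.image f) ∣ #s := by
  rcases s.eq_empty_or_nonempty with rfl | ⟨x, hx⟩
  · simp
  · exact Dvd.intro_left _ (h (f x) (mem_image_of_mem f hx))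

theorem card_filter_eq_le_div_of_uniform
    (h : ∀ y ∈ s.image f, #{x ∈ s | f x = y} * #(s.image f) = #s) (y : β) :
    #{x ∈ s | f x = y} ≤ #s / #(s.image f) := by
  by_cases hy : y ∈ s.image f
  · rw [← h y hy, Nat.mul_div_cancel _ (card_pos.2 ⟨y, hy⟩)]
  · rw [filter_eq_empty_iff.2 fun x hx hfx => hy (mem_image.2 ⟨x, hx, hfx⟩), card_empty]
    exact Nat.zero_le _

end Uniform

/-- Most significant digit first: `prefixValue N w / N ^ n` is `0.w₀w₁⋯w_{n-1}` in base `N`. -/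
def prefixValue (N : ℕ) {n : ℕ} (w : Fin n → ℕ) : ℕ := ∑ i, w i * N ^ (i.rev : ℕ)

section Digits

variable {N : ℕ}

theorem pow_mul_tsum_digits_eq {a : ℕ → ℕ} (ha : ∀ i, a i < N) (n : ℕ) :
    (N : ℝ) ^ n * ∑' i, (a i : ℝ) / N ^ (i + 1) =
      prefixValue N (fun i : Fin n => a i) +
        Real.ofDigits (fun i => (⟨a (i + n), ha _⟩ : Fin N)) := by
  have hN : (N : ℝ) ≠ 0 := Nat.cast_ne_zero.2 (Nat.ne_zero_of_lt (ha 0))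
  have h := Real.ofDigits_eq_sum_add_ofDigits (fun i => (⟨a i, ha i⟩ : Fin N)) n
  simp only [Real.ofDigits, Real.ofDigitsTerm] at h
  simp only [div_eq_mul_inv, h, mul_add, ← mul_assoc, mul_inv_cancel₀ (pow_ne_zero n hN),
    one_mul, prefixValue, Nat.cast_sum, Nat.cast_mul, Nat.cast_pow, mul_sum, Fin.val_rev]
  congr 1
  rw [← Fin.sum_univ_eq_sum_range]
  refine sum_congr rfl fun i _ => ?_
  rw [pow_sub₀ _ hN (by omega)]
  ring

theorem prefixValue_le_pow_mul_tsum_digits {a : ℕ → ℕ} (ha : ∀ i, a i < N) (n : ℕ) :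
    (prefixValue N (fun i : Fin n => a i) : ℝ) ≤ (N : ℝ) ^ n * ∑' i, (a i : ℝ) / N ^ (i + 1) ∧
      (N : ℝ) ^ n * ∑' i, (a i : ℝ) / N ^ (i + 1) ≤ prefixValue N (fun i : Fin n => a i) + 1 := by
  rw [pow_mul_tsum_digits_eq ha]
  exact ⟨le_add_of_nonneg_right (Real.ofDigits_nonneg _),
    add_le_add_right (Real.ofDigits_le_one _) _⟩

theorem prefixValue_injOn (n : ℕ) : Set.InjOn (prefixValue N (n := n)) {w | ∀ i, w i < N} := by
  intro w hw w' hw' h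
  have key : ∀ v : Fin n → ℕ, ∀ hv : ∀ i, v i < N,
      prefixValue N v = finFunctionFinEquiv (fun i => (⟨v i.rev, hv _⟩ : Fin N)) := by
    intro v hv
    rw [finFunctionFinEquiv_apply, prefixValue]
    exact Fintype.sum_equiv Fin.revPerm _ _ fun i => by simp
  rw [key w hw, key w' hw', Fin.val_inj, finFunctionFinEquiv.apply_eq_iff_eq] at h
  funext i
  simpa using congrArg Fin.val (congrFun h i.rev)

end Digits

def digitCylinder (N : ℕ) {ι : Type*} (A : Set (ι → ℕ)) {n : ℕ} (p : Fin n → ι → ℕ) :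
    Set (ι → ℝ) :=
  {x | ∃ a : ℕ → ι → ℕ, (∀ i, a i ∈ A) ∧ (∀ i : Fin n, a i = p i) ∧
    ∀ j, x j = ∑' i, (a i j : ℝ) / N ^ (i + 1)}

section Cylinder

variable {ι : Type*} {N : ℕ} {A : Set (ι → ℕ)} {n : ℕ} {p p' : Fin n → ι → ℕ} {x x' : ι → ℝ}

theorem cantorDigitSetPi_subset_iUnion_digitCylinder (n : ℕ) :
    cantorDigitSetPi N A ⊆ ⋃ p : Fin n → ι → ℕ, digitCylinder N A p := by
  rintro x ⟨a, ha, hx⟩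
  exact Set.mem_iUnion.2 ⟨fun i => a i, a, ha, fun _ => rfl, hx⟩

theorem mem_of_mem_digitCylinder (hx : x ∈ digitCylinder N A p) (i : Fin n) : p i ∈ A := by
  obtain ⟨a, ha, hp, -⟩ := hx
  exact hp i ▸ ha i

theorem prefixValue_le_pow_mul_of_mem_digitCylinder (hAN : ∀ v ∈ A, ∀ j, v j < N)
    (hx : x ∈ digitCylinder N A p) (j : ι) :
    (prefixValue N (fun i => p i j) : ℝ) ≤ (N : ℝ) ^ n * x j ∧
      (N : ℝ) ^ n * x j ≤ prefixValue N (fun i => p i j) + 1 := by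
  obtain ⟨a, ha, hp, hxa⟩ := hx
  have hpa : (fun i : Fin n => p i j) = fun i : Fin n => a i j := funext fun i => by rw [hp]
  rw [hpa, hxa]
  exact prefixValue_le_pow_mul_tsum_digits (fun i => hAN _ (ha i) j) n

theorem prefixValue_le_add_of_mem_digitCylinder (hAN : ∀ v ∈ A, ∀ j, v j < N)
    (hx : x ∈ digitCylinder N A p) (hx' : x' ∈ digitCylinder N A p') {j : ι}
    (hxx' : (N : ℝ) ^ n * |x j - x' j| ≤ N) :
    prefixValue N (fun i => p i j) ≤ prefixValue N (fun i => p' i j) + (N + 1) := by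
  have h := prefixValue_le_pow_mul_of_mem_digitCylinder hAN hx j
  have h' := prefixValue_le_pow_mul_of_mem_digitCylinder hAN hx' j
  have hle := (mul_le_mul_of_nonneg_left (le_abs_self (x j - x' j)) (by positivity)).trans hxx'
  have : (prefixValue N (fun i => p i j) : ℝ) ≤ prefixValue N (fun i => p' i j) + (N + 1) := by
    linarith [h.1, h'.2]
  exact_mod_cast this

theorem ediam_digitCylinder_le [Fintype ι] (hN : 0 < N) (hAN : ∀ v ∈ A, ∀ j, v j < N) :
    ediam (digitCylinder N A p) ≤ ENNReal.ofReal ((N ^ n : ℝ)⁻¹) := by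
  refine ediam_le fun x hx y hy => ?_
  rw [edist_dist]
  refine ENNReal.ofReal_le_ofReal ((dist_pi_le_iff (by positivity)).2 fun j => ?_)
  have hx := prefixValue_le_pow_mul_of_mem_digitCylinder hAN hx j
  have hy := prefixValue_le_pow_mul_of_mem_digitCylinder hAN hy j
  have hNn : (0 : ℝ) < N ^ n := by positivity
  rw [Real.dist_eq, ← one_div, le_div_iff₀' hNn, ← abs_of_pos hNn, ← abs_mul, mul_sub,
    abs_sub_le_iff]
  constructor <;> linarith [hx.1, hx.2, hy.1, hy.2]

end Cylinder

section Projection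

variable {ι : Type u} {N : ℕ} {A : Finset (ι → ℕ)} {I : Finset ι}

theorem card_digitCylinder_inter_preimage_nonempty_le (hAN : ∀ v ∈ A, ∀ j, v j < N) {r : ℕ}
    (hr : ∀ y, #{v ∈ A | I.restrict v = y} ≤ r) {n : ℕ} {U : Set (I → ℝ)} {δ : ℝ}
    (hδ : 0 ≤ δ) (hU : ediam U ≤ ENNReal.ofReal δ) (hδn : δ * N ^ n ≤ N) :
    #{p ∈ Fintype.piFinset fun _ : Fin n => A |
        (digitCylinder N (A : Set (ι → ℕ)) p ∩ I.restrict ⁻¹' U).Nonempty} ≤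
      (2 * (N + 1) + 1) ^ #I * r ^ n := by
  set good := {p ∈ Fintype.piFinset fun _ : Fin n => A |
    (digitCylinder N (A : Set (ι → ℕ)) p ∩ I.restrict ⁻¹' U).Nonempty}
  set key : (Fin n → ι → ℕ) → I → ℕ := fun p j => prefixValue N fun i => p i j
  have hdigits : ∀ p ∈ good, ∀ j, ∀ i, p i j < N := fun p hp j i =>
    hAN _ (Fintype.mem_piFinset.1 (mem_filter.1 hp).1 i) j
  have hfiber : ∀ p ∈ good, ∀ p' ∈ good, key p = key p' →
      ∀ i, I.restrict (p i) = I.restrict (p' i) := fun p hp p' hp' h i => funext fun j =>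
    congrFun (prefixValue_injOn n (hdigits p hp j) (hdigits p' hp' j) (congrFun h j)) i
  have hbox : ∀ k ∈ good.image key, ∀ k' ∈ good.image key, ∀ j, k j ≤ k' j + (N + 1) := by
    simp only [forall_mem_image]
    intro p hp p' hp' j
    obtain ⟨x, hx, hxU⟩ := (mem_filter.1 hp).2
    obtain ⟨x', hx', hx'U⟩ := (mem_filter.1 hp').2
    refine prefixValue_le_add_of_mem_digitCylinder hAN hx hx' (le_trans ?_ hδn)
    rw [mul_comm]
    gcongr
    rw [← Real.dist_eq, ← edist_le_ofReal hδ]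
    exact (edist_le_pi_edist (I.restrict x) (I.restrict x') j).trans
      ((edist_le_ediam_of_mem (s := U) hxU hx'U).trans hU)
  have hcard := card_le_of_forall_le_add _ _ hbox
  rw [Fintype.card_coe] at hcard
  calc #good ≤ r ^ n * #(good.image key) := card_le_mul_card_image _ _ fun k hk => ?_
    _ ≤ r ^ n * (2 * (N + 1) + 1) ^ #I := Nat.mul_le_mul_left _ hcard
    _ = (2 * (N + 1) + 1) ^ #I * r ^ n := mul_comm _ _
  obtain ⟨p₀, hp₀, rfl⟩ := mem_image.1 hk
  refine (card_le_card fun p hp => ?_).trans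
    ((card_piFinset_filter_eq_le_pow A I.restrict hr fun i => I.restrict (p₀ i)).trans_eq
      (by rw [Fintype.card_fin]))
  obtain ⟨hpg, hpk⟩ := mem_filter.1 hp
  refine Fintype.mem_piFinset.2 fun i => mem_filter.2 ⟨?_, hfiber p hpg p₀ hp₀ hpk i⟩
  exact Fintype.mem_piFinset.1 (mem_filter.1 hpg).1 i

theorem exists_digitCylinder_cover_of_ediam_le [Fintype ι] (hN : 2 ≤ N)
    (hAN : ∀ v ∈ A, ∀ j, v j < N) {r : ℕ} (hr : ∀ y, #{v ∈ A | I.restrict v = y} ≤ r)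
    {d t : ℝ} (hrd : (r : ℝ) ≤ N ^ d) (hd : 0 ≤ d) (ht : 0 < t) {X : Set (ι → ℝ)}
    (hX : X ⊆ cantorDigitSetPi N (A : Set (ι → ℕ)))
    {δ : ℝ≥0∞} (hδ : 0 < δ) (hδ1 : δ ≤ 1) {U : Set (I → ℝ)} (hU : ediam U ≤ δ) :
    ∃ (κ : Type u) (_ : Countable κ) (c : κ → Set (ι → ℝ)),
      X ∩ I.restrict ⁻¹' U ⊆ ⋃ i, c i ∧ (∀ i, ediam (c i) ≤ δ) ∧
      ∑' i, ediam (c i) ^ (t + d) ≤ ((2 * (N + 1) + 1) ^ #I : ℕ) * δ ^ t := by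
  have hδtop : δ ≠ ∞ := (hδ1.trans_lt ENNReal.one_lt_top).ne
  obtain ⟨n, hnδ, hδn⟩ := exists_inv_pow_le_and_mul_pow_le (N := N) (by exact_mod_cast hN)
    (ENNReal.toReal_pos hδ.ne' hδtop) (ENNReal.toReal_le_of_le_ofReal zero_le_one (by simpa))
  rw [← ENNReal.ofReal_toReal hδtop] at hU ⊢
  set q : ℝ := ((N : ℝ) ^ n)⁻¹
  set c : (Fin n → ι → ℕ) → Set (ι → ℝ) := fun p => digitCylinder N A p ∩ I.restrict ⁻¹' U
  have hdiam : ∀ p, ediam (c p) ≤ ENNReal.ofReal q := fun p =>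
    (ediam_mono Set.inter_subset_left).trans (ediam_digitCylinder_le (by omega) hAN)
  refine ⟨Fin n → ι → ℕ, inferInstance, c, ?_,
    fun p => (hdiam p).trans (ENNReal.ofReal_le_ofReal hnδ), ?_⟩
  · rintro x ⟨hx, hxU⟩
    obtain ⟨p, hp⟩ := Set.mem_iUnion.1 (cantorDigitSetPi_subset_iUnion_digitCylinder n (hX hx))
    exact Set.mem_iUnion.2 ⟨p, hp, hxU⟩
  set good := {p ∈ Fintype.piFinset fun _ : Fin n => A | (c p).Nonempty}
  have hgood : #good ≤ (2 * (N + 1) + 1) ^ #I * r ^ n :=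
    card_digitCylinder_inter_preimage_nonempty_le hAN hr ENNReal.toReal_nonneg hU hδn
  have hsupp : ∀ p, (c p).Nonempty → p ∈ good := fun p ⟨x, hx⟩ =>
    mem_filter.2 ⟨Fintype.mem_piFinset.2 (mem_of_mem_digitCylinder hx.1), x, hx⟩
  calc ∑' p, ediam (c p) ^ (t + d) ≤ #good * ENNReal.ofReal q ^ (t + d) :=
        tsum_ediam_rpow_le_card_mul hsupp hdiam (by linarith)
    _ ≤ ((2 * (N + 1) + 1) ^ #I : ℕ) * ((r : ℝ≥0∞) ^ n * ENNReal.ofReal q ^ (t + d)) := by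
        rw [← mul_assoc]
        gcongr
        exact_mod_cast hgood
    _ ≤ ((2 * (N + 1) + 1) ^ #I : ℕ) * ENNReal.ofReal δ.toReal ^ t := by
        gcongr
        exact (natCast_pow_mul_ofReal_rpow_add_le (by positivity) hrd hd ht.le n).trans
          (ENNReal.rpow_le_rpow (ENNReal.ofReal_le_ofReal hnδ) ht.le)

theorem hausdorffMeasure_add_eq_zero_of_restrict_image [Fintype ι] (hN : 2 ≤ N)
    (hAN : ∀ v ∈ A, ∀ j, v j < N) {r : ℕ} (hr : ∀ y, #{v ∈ A | I.restrict v = y} ≤ r) {d : ℝ}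
    (hrd : (r : ℝ) ≤ N ^ d) (hd : 0 ≤ d) {X : Set (ι → ℝ)}
    (hX : X ⊆ cantorDigitSetPi N (A : Set (ι → ℕ))) {t : ℝ} (ht : 0 < t)
    (hXt : μH[t] (I.restrict '' X) = 0) : μH[t + d] X = 0 :=
  hausdorffMeasure_eq_zero_of_image_eq_zero ht
    (ENNReal.natCast_ne_top ((2 * (N + 1) + 1) ^ #I)) one_pos
    (fun _ hδ hδ1 _ hU => exists_digitCylinder_cover_of_ediam_le hN hAN hr hrd hd ht hX hδ hδ1 hU)
    hXt

end Projection

theorem dimH_le_proj_add_of_uniform_general (N : ℕ) (hN : 2 ≤ N) {m : ℕ}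
    (A : Finset (Fin m → ℕ)) (hAN : ∀ v ∈ A, ∀ j, v j < N)
    (I : Finset (Fin m))
    (huniform : ∀ y ∈ A.image (fun v => fun i : I => v i.1),
      (A.filter (fun v => (fun i : I => v i.1) = y)).card *
        (A.image (fun v => fun i : I => v i.1)).card = A.card) :
    ∀ X ⊆ cantorDigitSetPi N (↑A : Set (Fin m → ℕ)),
      dimH X ≤ dimH ((fun x : Fin m → ℝ => fun i : I => x i.1) '' X) +
        ENNReal.ofReal
          (Real.log ((A.card : ℝ) / ((A.image (fun v => fun i : I => v i.1)).card : ℝ)) /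
            Real.log N) := by
  intro X hX
  change ∀ y ∈ A.image I.restrict, #{v ∈ A | I.restrict v = y} * #(A.image I.restrict) = #A
    at huniform
  change dimH X ≤ dimH (I.restrict '' X) +
    ENNReal.ofReal (Real.log ((#A : ℝ) / (#(A.image I.restrict) : ℝ)) / Real.log N)
  rw [← Nat.cast_div_charZero (card_image_dvd_of_uniform huniform)]
  have hN1 : (1 : ℝ) < N := by exact_mod_cast hN
  have hd := div_nonneg (Real.log_natCast_nonneg (#A / #(A.image I.restrict)))
    (Real.log_nonneg hN1.le)
  exact dimH_le_dimH_image_add hd fun t ht hXt =>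
    hausdorffMeasure_add_eq_zero_of_restrict_image hN hAN
      (card_filter_eq_le_div_of_uniform huniform) (Nat.cast_le_rpow_log_div_log hN1 _) hd hX ht hXt

/-- If the projection `π_I : A → A_I` is uniform, then for every `X ⊆ C_A`,
`dim_H X ≤ dim_H X_I + d` where `d = log(|A|/|A_I|)/log N`. -/
theorem dimH_le_proj_add_of_uniform (N : ℕ) (hN : 2 ≤ N) {m : ℕ}
    (A : Finset (Fin m → ℕ)) (hAN : ∀ v ∈ A, ∀ j, v j < N)
    (I : Finset (Fin m)) (hI : I.Nonempty)
    (huniform : ∀ y ∈ A.image (fun v => fun i : I => v i.1),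
      (A.filter (fun v => (fun i : I => v i.1) = y)).card *
        (A.image (fun v => fun i : I => v i.1)).card = A.card) :
    ∀ X ⊆ cantorDigitSetPi N (↑A : Set (Fin m → ℕ)),
      dimH X ≤ dimH ((fun x : Fin m → ℝ => fun i : I => x i.1) '' X) +
        ENNReal.ofReal
          (Real.log ((A.card : ℝ) / ((A.image (fun v => fun i : I => v i.1)).card : ℝ)) /
            Real.log N) :=
  dimH_le_proj_add_of_uniform_general N hN A hAN I huniform
end
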